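/- Let k be a real parameter with k² < 1, let k' = √(1−k²) and K = K(k). For all real numbers u, α, β, set θ = (β−α)/2, a = (u−α)/2 and b = (u−β)/2, and assume cn(a|k), cn(b|k), cn(b+K|k) and cn(b−K|k) are all nonzero. Then sn(θ|k)·(dn(a|k)/cn(a|k))·(dn(b|k)/cn(b|k)) + k'·cn(θ|k)·(1/cn(b+K|k))·(1/cn(a|k)) + (dn(b|k)/cn(b|k))·(dn(b−K|k)/cn(b−K|k)) = 0. (This identity, equivalent to the addition relation sn(u+v)·cn u − cn(u+v)·dn v·sn u − dn u·sn v = 0, is the key computation showing that the one-parameter family of functions f is in the kernel of the Kasteleyn operator of the bipartite graph G^Q associated to two independent Z-invariant Ising models.) -/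

import Mathlib

open Real Filter

/-- Complete elliptic integral of the first kind `K`, as a function of the
squared modulus `m = k²`. -/
noncomputable def ellK (m : ℝ) : ℝ :=
  ∫ τ in (0:ℝ)..(π/2), 1 / Real.sqrt (1 - m * Real.sin τ ^ 2)

/-- The incomplete elliptic integral of the first kind
`φ ↦ ∫₀^φ (1 - k² sin² t)^{-1/2} dt`, as a function of the squared modulus `m = k²`. -/
noncomputable def amF (m φ : ℝ) : ℝ :=
  ∫ t in (0:ℝ)..φ, 1 / Real.sqrt (1 - m * Real.sin t ^ 2)

/-- Jacobi's amplitude, the inverse of `amF m`, squared modulus `m = k²`. -/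
noncomputable def am (m u : ℝ) : ℝ := Function.invFun (amF m) u

/-- Jacobi elliptic function `sn`, squared modulus `m = k²`. -/
noncomputable def sn (u m : ℝ) : ℝ := Real.sin (am m u)

/-- Jacobi elliptic function `cn`, squared modulus `m = k²`. -/
noncomputable def cn (u m : ℝ) : ℝ := Real.cos (am m u)

/-- Jacobi elliptic function `dn`, squared modulus `m = k²`. -/
noncomputable def dn (u m : ℝ) : ℝ := Real.sqrt (1 - m * sn u m ^ 2)

/-- Jacobi elliptic function `sc = sn/cn`, squared modulus `m = k²`. -/
noncomputable def sc (u m : ℝ) : ℝ := sn u m / cn u m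

/-!
Jacobi's addition theorems for `cn` and `dn` hold because their right-hand sides, evaluated
at `(t, s - t)`, have zero derivative in `t`; this uses only the differential equations of
`sn, cn, dn`, which come from the inverse function theorem applied to the amplitude.
Taking `v = ±K` gives `cn (b + K) = -k' sn b / dn b` and `dn (b - K) / cn (b - K) = 1 / sn b`.
After these substitutions, and since `a = θ + b`, the identity multiplied by
`cn a cn b sn b / dn b` is `cn (θ + b) = cn θ cn b - sn θ sn b dn (θ + b)`, which follows
from the two addition theorems.
-/

noncomputable def ellIntegrand (m t : ℝ) : ℝ := 1 / √(1 - m * sin t ^ 2)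

variable {m : ℝ}

lemma one_sub_mul_sq_pos (hm : m < 1) {x : ℝ} (hx : x ^ 2 ≤ 1) : 0 < 1 - m * x ^ 2 := by
  rcases le_or_gt m 0 with h | h <;> nlinarith [sq_nonneg x]

lemma continuous_ellIntegrand (hm : m < 1) : Continuous (ellIntegrand m) :=
  continuous_const.div (by fun_prop) fun t =>
    (sqrt_pos.2 (one_sub_mul_sq_pos hm (sin_sq_le_one t))).ne'

lemma ellIntegrand_pos (hm : m < 1) (t : ℝ) : 0 < ellIntegrand m t :=
  one_div_pos.2 (sqrt_pos.2 (one_sub_mul_sq_pos hm (sin_sq_le_one t)))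

lemma one_div_sqrt_le_ellIntegrand (hm : m < 1) (t : ℝ) :
    1 / √(1 + |m|) ≤ ellIntegrand m t := by
  apply one_div_le_one_div_of_le (sqrt_pos.2 (one_sub_mul_sq_pos hm (sin_sq_le_one t)))
  apply sqrt_le_sqrt
  nlinarith [neg_abs_le m, abs_nonneg m, sin_sq_le_one t, sq_nonneg (sin t)]

lemma hasDerivAt_amF (hm : m < 1) (φ : ℝ) : HasDerivAt (amF m) (ellIntegrand m φ) φ :=
  ((continuous_ellIntegrand hm).integral_hasStrictDerivAt 0 φ).hasDerivAt

lemma continuous_amF (hm : m < 1) : Continuous (amF m) :=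
  continuous_iff_continuousAt.2 fun φ => (hasDerivAt_amF hm φ).continuousAt

lemma strictMono_amF (hm : m < 1) : StrictMono (amF m) :=
  strictMono_of_deriv_pos fun φ => (hasDerivAt_amF hm φ).deriv ▸ ellIntegrand_pos hm φ

lemma amF_zero : amF m 0 = 0 := by simp [amF]

lemma amF_neg (φ : ℝ) : amF m (-φ) = -amF m φ := by
  have h := intervalIntegral.integral_comp_neg (a := 0) (b := φ) (ellIntegrand m)
  simp only [ellIntegrand, sin_neg, neg_sq, neg_zero] at h
  rw [amF, amF, intervalIntegral.integral_symm, ← h]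

lemma one_div_sqrt_mul_le_amF (hm : m < 1) {φ : ℝ} (hφ : 0 ≤ φ) :
    1 / √(1 + |m|) * φ ≤ amF m φ :=
  calc 1 / √(1 + |m|) * φ = ∫ _ in (0 : ℝ)..φ, 1 / √(1 + |m|) := by simp [mul_comm]
    _ ≤ ∫ t in (0 : ℝ)..φ, ellIntegrand m t :=
      intervalIntegral.integral_mono_on hφ intervalIntegrable_const
        ((continuous_ellIntegrand hm).intervalIntegrable 0 φ)
        fun t _ => one_div_sqrt_le_ellIntegrand hm t

lemma amF_surjective (hm : m < 1) : Function.Surjective (amF m) := by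
  have hc : 0 < 1 / √(1 + |m|) := by positivity
  refine (continuous_amF hm).surjective ?_ ?_
  · refine tendsto_atTop_mono' _ ?_ (tendsto_id.const_mul_atTop hc)
    filter_upwards [eventually_ge_atTop 0] with φ hφ
    exact one_div_sqrt_mul_le_amF hm hφ
  · refine tendsto_atBot_mono' _ ?_ (tendsto_id.const_mul_atBot hc)
    filter_upwards [eventually_le_atBot 0] with φ hφ
    have := one_div_sqrt_mul_le_amF hm (neg_nonneg.2 hφ)
    rw [amF_neg] at this
    simp only [id]
    linarith

lemma am_amF (hm : m < 1) (φ : ℝ) : am m (amF m φ) = φ :=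
  Function.leftInverse_invFun (strictMono_amF hm).injective φ

lemma amF_am (hm : m < 1) (u : ℝ) : amF m (am m u) = u :=
  Function.invFun_eq (amF_surjective hm u)

lemma strictMono_am (hm : m < 1) : StrictMono (am m) := fun u v huv =>
  (strictMono_amF hm).lt_iff_lt.1 (by rwa [amF_am hm, amF_am hm])

lemma continuous_am (hm : m < 1) : Continuous (am m) :=
  (strictMono_am hm).monotone.continuous_of_surjective fun φ => ⟨amF m φ, am_amF hm φ⟩

lemma hasDerivAt_am (hm : m < 1) (u : ℝ) : HasDerivAt (am m) (dn u m) u := by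
  have h := HasDerivAt.of_local_left_inverse (continuous_am hm).continuousAt
    (hasDerivAt_amF hm (am m u)) (ellIntegrand_pos hm (am m u)).ne'
    (Eventually.of_forall (amF_am hm))
  rwa [ellIntegrand, one_div, inv_inv] at h

lemma am_zero (hm : m < 1) : am m 0 = 0 := by
  simpa [amF_zero] using am_amF hm 0

lemma am_neg (hm : m < 1) (u : ℝ) : am m (-u) = -am m u :=
  (strictMono_amF hm).injective (by rw [amF_am hm, amF_neg, amF_am hm])

lemma am_ellK (hm : m < 1) : am m (ellK m) = π / 2 :=
  am_amF hm (π / 2)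

lemma sn_sq_le_one (u : ℝ) : sn u m ^ 2 ≤ 1 := sin_sq_le_one _

lemma cn_sq (u : ℝ) : cn u m ^ 2 = 1 - sn u m ^ 2 := by
  rw [sn, cn, ← sin_sq_add_cos_sq (am m u)]; ring

lemma dn_sq (hm : m < 1) (u : ℝ) : dn u m ^ 2 = 1 - m * sn u m ^ 2 :=
  sq_sqrt (one_sub_mul_sq_pos hm (sn_sq_le_one u)).le

lemma dn_pos (hm : m < 1) (u : ℝ) : 0 < dn u m :=
  sqrt_pos.2 (one_sub_mul_sq_pos hm (sn_sq_le_one u))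

lemma sn_zero (hm : m < 1) : sn 0 m = 0 := by rw [sn, am_zero hm, sin_zero]

lemma cn_zero (hm : m < 1) : cn 0 m = 1 := by rw [cn, am_zero hm, cos_zero]

lemma dn_zero (hm : m < 1) : dn 0 m = 1 := by simp [dn, sn_zero hm]

lemma sn_neg (hm : m < 1) (u : ℝ) : sn (-u) m = -sn u m := by rw [sn, sn, am_neg hm, sin_neg]

lemma cn_neg (hm : m < 1) (u : ℝ) : cn (-u) m = cn u m := by rw [cn, cn, am_neg hm, cos_neg]

lemma dn_neg (hm : m < 1) (u : ℝ) : dn (-u) m = dn u m := by rw [dn, dn, sn_neg hm, neg_sq]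

lemma sn_ellK (hm : m < 1) : sn (ellK m) m = 1 := by rw [sn, am_ellK hm, sin_pi_div_two]

lemma cn_ellK (hm : m < 1) : cn (ellK m) m = 0 := by rw [cn, am_ellK hm, cos_pi_div_two]

lemma dn_ellK (hm : m < 1) : dn (ellK m) m = √(1 - m) := by simp [dn, sn_ellK hm]

lemma hasDerivAt_sn (hm : m < 1) (u : ℝ) :
    HasDerivAt (fun u => sn u m) (cn u m * dn u m) u :=
  (hasDerivAt_sin (am m u)).comp u (hasDerivAt_am hm u)

lemma hasDerivAt_cn (hm : m < 1) (u : ℝ) :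
    HasDerivAt (fun u => cn u m) (-(sn u m * dn u m)) u :=
  ((hasDerivAt_cos (am m u)).comp u (hasDerivAt_am hm u)).congr_deriv (neg_mul _ _)

lemma hasDerivAt_dn (hm : m < 1) (u : ℝ) :
    HasDerivAt (fun u => dn u m) (-(m * sn u m * cn u m)) u := by
  have h := (hasDerivAt_sqrt (one_sub_mul_sq_pos hm (sn_sq_le_one u)).ne').comp u
    ((((hasDerivAt_sn hm u).pow 2).const_mul m).const_sub 1)
  refine h.congr_deriv ?_
  rw [show √(1 - m * sn u m ^ 2) = dn u m from rfl]
  field_simp [(dn_pos hm u).ne']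
  ring

lemma one_sub_mul_sn_sq_mul_sn_sq_pos (hm : m < 1) (u v : ℝ) :
    0 < 1 - m * sn u m ^ 2 * sn v m ^ 2 := by
  have h := one_sub_mul_sq_pos hm (x := sn u m * sn v m)
    (by rw [mul_pow]; exact mul_le_one₀ (sn_sq_le_one u) (sq_nonneg _) (sn_sq_le_one v))
  rwa [mul_pow, ← mul_assoc] at h

lemma apply_add_zero_of_hasDerivAt_sub {F : ℝ → ℝ → ℝ}
    (hF : ∀ s t, HasDerivAt (fun t => F t (s - t)) 0 t) (u v : ℝ) : F (u + v) 0 = F u v := by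
  simpa using is_const_of_deriv_eq_zero (fun t => (hF (u + v) t).differentiableAt)
    (fun t => (hF (u + v) t).deriv) (u + v) u

lemma hasDerivAt_cn_add_formula (hm : m < 1) (s t : ℝ) :
    HasDerivAt (fun t => (cn t m * cn (s - t) m
        - sn t m * sn (s - t) m * dn t m * dn (s - t) m)
      / (1 - m * sn t m ^ 2 * sn (s - t) m ^ 2)) 0 t := by
  have hs1 := hasDerivAt_sn hm t
  have hc1 := hasDerivAt_cn hm t
  have hd1 := hasDerivAt_dn hm t
  have hs2 := (hasDerivAt_sn hm (s - t)).comp_const_sub s t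
  have hc2 := (hasDerivAt_cn hm (s - t)).comp_const_sub s t
  have hd2 := (hasDerivAt_dn hm (s - t)).comp_const_sub s t
  have hnum := (hc1.mul hc2).sub (((hs1.mul hs2).mul hd1).mul hd2)
  have hden := (((hs1.pow 2).const_mul m).mul (hs2.pow 2)).const_sub 1
  refine (hnum.div hden (one_sub_mul_sn_sq_mul_sn_sq_pos hm t (s - t)).ne').congr_deriv ?_
  dsimp only [Pi.mul_apply, Pi.sub_apply, Pi.pow_apply]
  rw [div_eq_zero_iff]
  left
  have hcn1 := cn_sq (m := m) t
  have hdn1 := dn_sq hm t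
  have hcn2 := cn_sq (m := m) (s - t)
  have hdn2 := dn_sq hm (s - t)
  set s1 := sn t m; set c1 := cn t m; set d1 := dn t m
  set s2 := sn (s - t) m; set c2 := cn (s - t) m; set d2 := dn (s - t) m
  linear_combination
    (2*m*s1*d1*s2^2*c2) * hcn1
    + ((-1)*c1*s2*d2 + (-1)*m*s1^2*c1*s2^3*d2) * hdn1
    + ((-2)*m*s1^2*c1*s2*d2) * hcn2
    + (s1*d1*c2 + m*s1^3*d1*s2^2*c2) * hdn2

lemma hasDerivAt_dn_add_formula (hm : m < 1) (s t : ℝ) :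
    HasDerivAt (fun t => (dn t m * dn (s - t) m
        - m * sn t m * sn (s - t) m * cn t m * cn (s - t) m)
      / (1 - m * sn t m ^ 2 * sn (s - t) m ^ 2)) 0 t := by
  have hs1 := hasDerivAt_sn hm t
  have hc1 := hasDerivAt_cn hm t
  have hd1 := hasDerivAt_dn hm t
  have hs2 := (hasDerivAt_sn hm (s - t)).comp_const_sub s t
  have hc2 := (hasDerivAt_cn hm (s - t)).comp_const_sub s t
  have hd2 := (hasDerivAt_dn hm (s - t)).comp_const_sub s t
  have hnum := (hd1.mul hd2).sub ((((hs1.const_mul m).mul hs2).mul hc1).mul hc2)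
  have hden := (((hs1.pow 2).const_mul m).mul (hs2.pow 2)).const_sub 1
  refine (hnum.div hden (one_sub_mul_sn_sq_mul_sn_sq_pos hm t (s - t)).ne').congr_deriv ?_
  dsimp only [Pi.mul_apply, Pi.sub_apply, Pi.pow_apply]
  rw [div_eq_zero_iff]
  left
  have hcn1 := cn_sq (m := m) t
  have hdn1 := dn_sq hm t
  have hcn2 := cn_sq (m := m) (s - t)
  have hdn2 := dn_sq hm (s - t)
  set s1 := sn t m; set c1 := cn t m; set d1 := dn t m
  set s2 := sn (s - t) m; set c2 := cn (s - t) m; set d2 := dn (s - t) m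
  linear_combination
    ((-1)*m*d1*s2*c2 + (-1)*m^2*s1^2*d1*s2^3*c2) * hcn1
    + (2*m*s1*c1*s2^2*d2) * hdn1
    + (m*s1*c1*d2 + m^2*s1^3*c1*s2^2*d2) * hcn2
    + ((-2)*m*s1^2*d1*s2*c2) * hdn2

lemma cn_add (hm : m < 1) (u v : ℝ) :
    cn (u + v) m = (cn u m * cn v m - sn u m * sn v m * dn u m * dn v m)
      / (1 - m * sn u m ^ 2 * sn v m ^ 2) := by
  simpa [sn_zero hm, cn_zero hm, dn_zero hm] using apply_add_zero_of_hasDerivAt_sub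
    (F := fun x y => (cn x m * cn y m - sn x m * sn y m * dn x m * dn y m)
      / (1 - m * sn x m ^ 2 * sn y m ^ 2)) (hasDerivAt_cn_add_formula hm) u v

lemma dn_add (hm : m < 1) (u v : ℝ) :
    dn (u + v) m = (dn u m * dn v m - m * sn u m * sn v m * cn u m * cn v m)
      / (1 - m * sn u m ^ 2 * sn v m ^ 2) := by
  simpa [sn_zero hm, cn_zero hm, dn_zero hm] using apply_add_zero_of_hasDerivAt_sub
    (F := fun x y => (dn x m * dn y m - m * sn x m * sn y m * cn x m * cn y m)
      / (1 - m * sn x m ^ 2 * sn y m ^ 2)) (hasDerivAt_dn_add_formula hm) u v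

lemma cn_add_ellK (hm : m < 1) (u : ℝ) :
    cn (u + ellK m) m = -(√(1 - m) * sn u m) / dn u m := by
  have hd := (dn_pos hm u).ne'
  rw [cn_add hm, sn_ellK hm, cn_ellK hm, dn_ellK hm, one_pow, mul_one, mul_one, ← dn_sq hm]
  field_simp
  ring

lemma cn_sub_ellK (hm : m < 1) (u : ℝ) :
    cn (u - ellK m) m = √(1 - m) * sn u m / dn u m := by
  have hd := (dn_pos hm u).ne'
  rw [sub_eq_add_neg, cn_add hm, sn_neg hm, cn_neg hm, dn_neg hm, sn_ellK hm, cn_ellK hm,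
    dn_ellK hm, neg_one_sq, mul_one, ← dn_sq hm]
  field_simp
  ring

lemma dn_sub_ellK (hm : m < 1) (u : ℝ) : dn (u - ellK m) m = √(1 - m) / dn u m := by
  have hd := (dn_pos hm u).ne'
  rw [sub_eq_add_neg, dn_add hm, sn_neg hm, cn_neg hm, dn_neg hm, sn_ellK hm, cn_ellK hm,
    dn_ellK hm, neg_one_sq, mul_one, ← dn_sq hm]
  field_simp
  ring

lemma dn_div_cn_sub_ellK (hm : m < 1) (u : ℝ) :
    dn (u - ellK m) m / cn (u - ellK m) m = 1 / sn u m := by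
  have hk : √(1 - m) ≠ 0 := (sqrt_pos.2 (by linarith)).ne'
  rw [dn_sub_ellK hm, cn_sub_ellK hm, div_div_div_cancel_right₀ (dn_pos hm u).ne',
    div_mul_cancel_left₀ hk, one_div]

lemma cn_add' (hm : m < 1) (u v : ℝ) :
    cn (u + v) m = cn u m * cn v m - sn u m * sn v m * dn (u + v) m := by
  have hD := (one_sub_mul_sn_sq_mul_sn_sq_pos hm u v).ne'
  rw [cn_add hm, dn_add hm, eq_sub_iff_add_eq, mul_div_assoc', ← add_div,
    div_eq_iff hD]
  ring

theorem GQ_kernel_identity_general (k : ℝ) (hk : k ^ 2 < 1) (u α β : ℝ)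
    (ha : cn ((u - α) / 2) (k ^ 2) ≠ 0)
    (hb : cn ((u - β) / 2) (k ^ 2) ≠ 0)
    (hbp : cn ((u - β) / 2 + ellK (k ^ 2)) (k ^ 2) ≠ 0) :
    sn ((β - α) / 2) (k ^ 2) *
        (dn ((u - α) / 2) (k ^ 2) / cn ((u - α) / 2) (k ^ 2)) *
        (dn ((u - β) / 2) (k ^ 2) / cn ((u - β) / 2) (k ^ 2))
      + Real.sqrt (1 - k ^ 2) * cn ((β - α) / 2) (k ^ 2) *
          (1 / cn ((u - β) / 2 + ellK (k ^ 2)) (k ^ 2)) *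
          (1 / cn ((u - α) / 2) (k ^ 2))
      + (dn ((u - β) / 2) (k ^ 2) / cn ((u - β) / 2) (k ^ 2)) *
          (dn ((u - β) / 2 - ellK (k ^ 2)) (k ^ 2) /
            cn ((u - β) / 2 - ellK (k ^ 2)) (k ^ 2)) = 0 := by
  set a := (u - α) / 2
  set b := (u - β) / 2
  set θ := (β - α) / 2
  have hsb : sn b (k ^ 2) ≠ 0 := fun h => hbp (by rw [cn_add_ellK hk, h]; simp)
  have hkey := cn_add' hk θ b
  rw [show θ + b = a by ring] at hkey
  have hk' : √(1 - k ^ 2) ≠ 0 := (sqrt_pos.2 (by linarith)).ne'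
  have hdb := (dn_pos hk b).ne'
  rw [dn_div_cn_sub_ellK hk, cn_add_ellK hk]
  field_simp
  linear_combination dn b (k ^ 2) * hkey

/-- The key identity behind the kernel property of the functions `f` for the Kasteleyn
operator on the bipartite graph `G^Q`: with `θ = (β-α)/2`, `a = (u-α)/2`, `b = (u-β)/2`
and `K = K(k)`, `k' = √(1-k²)`,
`sn θ (dn a/cn a)(dn b/cn b) + k' cn θ (1/cn(b+K))(1/cn a)
  + (dn b/cn b)(dn(b-K)/cn(b-K)) = 0`. -/
theorem GQ_kernel_identity (k : ℝ) (hk : k ^ 2 < 1) (u α β : ℝ)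
    (ha : cn ((u - α) / 2) (k ^ 2) ≠ 0)
    (hb : cn ((u - β) / 2) (k ^ 2) ≠ 0)
    (hbp : cn ((u - β) / 2 + ellK (k ^ 2)) (k ^ 2) ≠ 0)
    (hbm : cn ((u - β) / 2 - ellK (k ^ 2)) (k ^ 2) ≠ 0) :
    sn ((β - α) / 2) (k ^ 2) *
        (dn ((u - α) / 2) (k ^ 2) / cn ((u - α) / 2) (k ^ 2)) *
        (dn ((u - β) / 2) (k ^ 2) / cn ((u - β) / 2) (k ^ 2))
      + Real.sqrt (1 - k ^ 2) * cn ((β - α) / 2) (k ^ 2) *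
          (1 / cn ((u - β) / 2 + ellK (k ^ 2)) (k ^ 2)) *
          (1 / cn ((u - α) / 2) (k ^ 2))
      + (dn ((u - β) / 2) (k ^ 2) / cn ((u - β) / 2) (k ^ 2)) *
          (dn ((u - β) / 2 - ellK (k ^ 2)) (k ^ 2) /
            cn ((u - β) / 2 - ellK (k ^ 2)) (k ^ 2)) = 0 :=
  GQ_kernel_identity_general k hk u α β ha hb hbp
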